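/- arXiv:1606.03643 — 5 statements merged into one kernel-verified Lean document; each statement's English description precedes it below -/
import Mathlib

section
/- The function H(x,y,z) = ε·p₁·(p₁x + p₂z)² + (p₁y − ε·p₂p₃)² is a first integral of the flow of the system ε·x' = −y, y' = p₁x + p₂z, z' = p₃; that is, the derivative of H along any solution of this system is zero. -/
/- With `u = p₁x + p₂z` and `v = p₁y - ε p₂p₃`, the system gives `ε u' = -v` and `v' = p₁u`,
so `H = ε p₁ u² + v²` has derivative `2 p₁ u (ε u') + 2 v v' = -2 p₁ u v + 2 p₁ u v = 0`. -/

lemma orbital_derivative_H_eq_zero {ε : ℝ} (hε : ε ≠ 0) (p1 p2 p3 x y z : ℝ) :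
    ε * p1 * (2 * (p1 * x + p2 * z) * (p1 * (-y / ε) + p2 * p3)) +
      2 * (p1 * y - ε * p2 * p3) * (p1 * (p1 * x + p2 * z)) = 0 := by
  field_simp
  ring

/-- The function `H(x,y,z) = ε p₁ (p₁x + p₂z)² + (p₁y − ε p₂p₃)²` is a first integral
of the central-zone system `ε x' = −y`, `y' = p₁x + p₂z`, `z' = p₃`. -/
theorem first_integral_H (ε p1 p2 p3 : ℝ) (hε : 0 < ε) (x y z : ℝ → ℝ)
    (hx : ∀ t, HasDerivAt x (-(y t) / ε) t)
    (hy : ∀ t, HasDerivAt y (p1 * x t + p2 * z t) t)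
    (hz : ∀ t, HasDerivAt z p3 t) :
    ∀ t, HasDerivAt
      (fun s => ε * p1 * (p1 * x s + p2 * z s) ^ 2 + (p1 * y s - ε * p2 * p3) ^ 2) 0 t := by
  intro t
  have hu : HasDerivAt (fun s => p1 * x s + p2 * z s) (p1 * (-(y t) / ε) + p2 * p3) t :=
    ((hx t).const_mul p1).add ((hz t).const_mul p2)
  have hv : HasDerivAt (fun s => p1 * y s - ε * p2 * p3) (p1 * (p1 * x t + p2 * z t)) t :=
    ((hy t).const_mul p1).sub_const _
  have hH := ((hu.pow 2).const_mul (ε * p1)).add (hv.pow 2)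
  refine hH.congr_deriv ?_
  simp only [Nat.cast_ofNat, pow_one, Nat.add_one_sub_one]
  exact orbital_derivative_H_eq_zero hε.ne' p1 p2 p3 (x t) (y t) (z t)
end

section
/- For p₁ > 0 and ε > 0 with 1 − 4εp₁ > 0, set λ_A = −(1 + √(1 − 4εp₁))/2. Then the half-plane S_ε^A = {(x,y,z) : x < −δ, −λ_A²x + λ_A y + ε p₂ z = −δ λ_A − (p₂p₃/λ_A)ε²} is invariant under the flow of the system ε·x' = −y − x − δ, y' = p₁x + p₂z, z' = p₃ (the system in the zone x ≤ −δ, where f_δ(x) = −x − δ). -/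
/-!
Along the flow, the functional `G` cutting out `S_ε^A` satisfies `G' = (λ_A / ε) G`: the
difference `G' - (λ_A / ε) G` is `(λ_A x / ε) (λ_A² + λ_A + ε p₁)`, which vanishes because `λ_A` is a
root of the characteristic polynomial. So `G` solves a scalar linear ODE and its zero set is
invariant.
-/

noncomputable def slowManifoldFunctional (ε p2 p3 δ lam x y z : ℝ) : ℝ :=
  -(lam ^ 2) * x + lam * y + ε * p2 * z + δ * lam + (p2 * p3 / lam) * ε ^ 2

lemma neg_one_add_sqrt_div_two_sq_add_self {c : ℝ} (hc : 0 ≤ 1 - 4 * c) :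
    (-(1 + √(1 - 4 * c)) / 2) ^ 2 + -(1 + √(1 - 4 * c)) / 2 + c = 0 := by
  nlinarith [Real.sq_sqrt hc]

lemma neg_one_add_sqrt_div_two_neg (d : ℝ) : -(1 + √d) / 2 < 0 := by
  linarith [Real.sqrt_nonneg d]

theorem hasDerivAt_slowManifoldFunctional {ε p1 p2 p3 δ lam : ℝ} {x y z : ℝ → ℝ}
    (hε : ε ≠ 0) (hlam : lam ≠ 0) (hquad : lam ^ 2 + lam + ε * p1 = 0)
    (hx : ∀ t, HasDerivAt x ((-(y t) - x t - δ) / ε) t)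
    (hy : ∀ t, HasDerivAt y (p1 * x t + p2 * z t) t)
    (hz : ∀ t, HasDerivAt z p3 t) (t : ℝ) :
    HasDerivAt (fun s => slowManifoldFunctional ε p2 p3 δ lam (x s) (y s) (z s))
      (lam / ε * slowManifoldFunctional ε p2 p3 δ lam (x t) (y t) (z t)) t := by
  have hG := ((((hx t).const_mul (-(lam ^ 2))).add ((hy t).const_mul lam)).add
    ((hz t).const_mul (ε * p2))).add_const (δ * lam + (p2 * p3 / lam) * ε ^ 2)
  refine (hG.congr_of_eventuallyEq (.of_forall fun s => ?_)).congr_deriv ?_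
  · simp only [slowManifoldFunctional, Pi.add_apply]
    ring
  · unfold slowManifoldFunctional
    field_simp
    linear_combination lam * x t * hquad

theorem attracting_slow_manifold_invariant_general (ε p1 p2 p3 δ : ℝ) (hε : 0 < ε)
    (h4 : 0 < 1 - 4 * ε * p1)
    (lamA : ℝ) (hlam : lamA = -(1 + Real.sqrt (1 - 4 * ε * p1)) / 2)
    (x y z : ℝ → ℝ)
    (hx : ∀ t, HasDerivAt x ((-(y t) - x t - δ) / ε) t)
    (hy : ∀ t, HasDerivAt y (p1 * x t + p2 * z t) t)
    (hz : ∀ t, HasDerivAt z p3 t) :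
    ∀ t, (-(lamA ^ 2) * x t + lamA * y t + ε * p2 * z t + δ * lamA + (p2 * p3 / lamA) * ε ^ 2 = 0) →
      HasDerivAt
        (fun s => -(lamA ^ 2) * x s + lamA * y s + ε * p2 * z s + δ * lamA + (p2 * p3 / lamA) * ε ^ 2)
        0 t := by
  intro t hG
  have hquad : lamA ^ 2 + lamA + ε * p1 = 0 := by
    rw [hlam, mul_assoc 4]
    exact neg_one_add_sqrt_div_two_sq_add_self (by linarith)
  have hlam0 : lamA ≠ 0 := hlam ▸ (neg_one_add_sqrt_div_two_neg _).ne
  have hG' := hasDerivAt_slowManifoldFunctional hε.ne' hlam0 hquad hx hy hz t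
  rwa [slowManifoldFunctional, hG, mul_zero] at hG'

/-- For `p₁ > 0`, `1 − 4εp₁ > 0` and `λ_A = −(1+√(1−4εp₁))/2`, the half-plane
`S_ε^A = {x < −δ, −λ_A²x + λ_A y + ε p₂ z = −δλ_A − (p₂p₃/λ_A)ε²}` is invariant under
the flow of `ε x' = −y − x − δ`, `y' = p₁x + p₂z`, `z' = p₃`: the defining linear
functional has zero derivative along the flow whenever it vanishes. -/
theorem attracting_slow_manifold_invariant (ε p1 p2 p3 δ : ℝ) (hε : 0 < ε)
    (hp1 : 0 < p1) (h4 : 0 < 1 - 4 * ε * p1) (hδ : 0 < δ)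
    (lamA : ℝ) (hlam : lamA = -(1 + Real.sqrt (1 - 4 * ε * p1)) / 2)
    (x y z : ℝ → ℝ)
    (hx : ∀ t, HasDerivAt x ((-(y t) - x t - δ) / ε) t)
    (hy : ∀ t, HasDerivAt y (p1 * x t + p2 * z t) t)
    (hz : ∀ t, HasDerivAt z p3 t) :
    ∀ t, (-(lamA ^ 2) * x t + lamA * y t + ε * p2 * z t + δ * lamA + (p2 * p3 / lamA) * ε ^ 2 = 0) →
      HasDerivAt
        (fun s => -(lamA ^ 2) * x s + lamA * y s + ε * p2 * z s + δ * lamA + (p2 * p3 / lamA) * ε ^ 2)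
        0 t :=
  attracting_slow_manifold_invariant_general ε p1 p2 p3 δ hε h4 lamA hlam x y z hx hy hz
end

section
/- Suppose γ is a solution of the R-reversible system ε·x' = −y + f_δ(x), y' = p₁x + p₂z, z' = p₃ with γ(0) = p ∈ L_ε^A ⊂ {x = −δ} and γ(T) = q ∈ L_ε^R ⊂ {x = δ} for some T > 0, where L_ε^R = R(L_ε^A) with R(x,y,z) = (−x,y,−z). If among all such connecting solutions the flight time T determines the solution uniquely, then q = R(p). -/
/-- The reversibility `R(x,y,z) = (−x, y, −z)`. -/
def Rmap : ℝ × ℝ × ℝ → ℝ × ℝ × ℝ := fun v => (-v.1, v.2.1, -v.2.2)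

/-- Being a solution of `ε x' = −y + f_δ(x)`, `y' = p₁x + p₂z`, `z' = p₃`,
with `f_δ(x) = max(|x| − δ, 0)`. -/
def IsSol (ε p1 p2 p3 δ : ℝ) (γ : ℝ → ℝ × ℝ × ℝ) : Prop :=
  ∀ t : ℝ,
    HasDerivAt (fun s => (γ s).1) ((-(γ t).2.1 + max (|(γ t).1| - δ) 0) / ε) t ∧
    HasDerivAt (fun s => (γ s).2.1) (p1 * (γ t).1 + p2 * (γ t).2.2) t ∧
    HasDerivAt (fun s => (γ s).2.2) p3 t

/-!
If `γ` solves the system, so does its reversed reflection `t ↦ R(γ(T − t))`, and since `R` is an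
involution this curve also starts on `L_ε^A` and ends on `R(L_ε^A)` at time `T`. Uniqueness makes
it equal to `γ`; evaluating at `T` gives `γ(T) = R(γ(0))`.
-/

theorem Rmap_involutive : Function.Involutive Rmap := fun v => by simp [Rmap]

def reverseAt (T : ℝ) (γ : ℝ → ℝ × ℝ × ℝ) : ℝ → ℝ × ℝ × ℝ := fun t => Rmap (γ (T - t))

@[simp]
theorem reverseAt_zero (T : ℝ) (γ : ℝ → ℝ × ℝ × ℝ) : reverseAt T γ 0 = Rmap (γ T) := by
  simp [reverseAt]

@[simp]
theorem reverseAt_self (T : ℝ) (γ : ℝ → ℝ × ℝ × ℝ) : reverseAt T γ T = Rmap (γ 0) := by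
  simp [reverseAt]

theorem IsSol.reverseAt {ε p1 p2 p3 δ : ℝ} {γ : ℝ → ℝ × ℝ × ℝ} (hγ : IsSol ε p1 p2 p3 δ γ)
    (T : ℝ) : IsSol ε p1 p2 p3 δ (reverseAt T γ) := by
  intro t
  obtain ⟨hx, hy, hz⟩ := hγ (T - t)
  refine ⟨(hx.comp_const_sub T t).neg.congr_deriv ?_, (hy.comp_const_sub T t).congr_deriv ?_,
    (hz.comp_const_sub T t).neg.congr_deriv (neg_neg p3)⟩ <;>
  · simp only [_root_.reverseAt, Rmap, abs_neg]
    ring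

theorem maximal_canards_are_reversible_general (ε p1 p2 p3 δ : ℝ)
    (LA : Set (ℝ × ℝ × ℝ))
    (γ : ℝ → ℝ × ℝ × ℝ) (T : ℝ)
    (hγ : IsSol ε p1 p2 p3 δ γ)
    (hp : γ 0 ∈ LA) (hq : γ T ∈ Rmap '' LA)
    (huniq : ∀ γ₁ γ₂ : ℝ → ℝ × ℝ × ℝ,
      IsSol ε p1 p2 p3 δ γ₁ → IsSol ε p1 p2 p3 δ γ₂ →
      γ₁ 0 ∈ LA → γ₂ 0 ∈ LA → γ₁ T ∈ Rmap '' LA → γ₂ T ∈ Rmap '' LA → γ₁ = γ₂) :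
    γ T = Rmap (γ 0) := by
  have hstart : reverseAt T γ 0 ∈ LA := by
    obtain ⟨a, ha, hpa⟩ := hq
    rwa [reverseAt_zero, ← hpa, Rmap_involutive]
  have hend : reverseAt T γ T ∈ Rmap '' LA := by
    simpa only [reverseAt_self] using Set.mem_image_of_mem Rmap hp
  have hrev : γ = reverseAt T γ := huniq _ _ hγ (hγ.reverseAt T) hp hstart hq hend
  calc γ T = reverseAt T γ T := congrFun hrev T
    _ = Rmap (γ 0) := reverseAt_self T γ

/-- If a solution `γ` of the reversible system connects `p ∈ L_ε^A` (at time 0) to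
`q ∈ L_ε^R = R(L_ε^A)` (at time `T > 0`), and the flight time determines the connecting
solution uniquely, then `q = R(p)`. -/
theorem maximal_canards_are_reversible (ε p1 p2 p3 δ : ℝ) (hε : 0 < ε) (hδ : 0 < δ)
    (LA : Set (ℝ × ℝ × ℝ))
    (γ : ℝ → ℝ × ℝ × ℝ) (T : ℝ) (hT : 0 < T)
    (hγ : IsSol ε p1 p2 p3 δ γ)
    (hp : γ 0 ∈ LA) (hq : γ T ∈ Rmap '' LA)
    (huniq : ∀ γ₁ γ₂ : ℝ → ℝ × ℝ × ℝ,
      IsSol ε p1 p2 p3 δ γ₁ → IsSol ε p1 p2 p3 δ γ₂ →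
      γ₁ 0 ∈ LA → γ₂ 0 ∈ LA → γ₁ T ∈ Rmap '' LA → γ₂ T ∈ Rmap '' LA → γ₁ = γ₂) :
    γ T = Rmap (γ 0) :=
  maximal_canards_are_reversible_general ε p1 p2 p3 δ LA γ T hγ hp hq huniq
end

section
/- For p₃ > 0, p₁ > 0 and δ = π√ε, the z-intercepts of the lines L_ε^A and L_ε^R satisfy z_A* = δp₁/p₂ + p₃ε + O(ε²) and z_R* = −z_A* (exactly), and the common y-intercept satisfies y* = −δp₁ε + O(ε²); in particular, for ε small enough, sign(y*) = −sign(p₁) and sign(z_A*) = sign(p₁/p₂). -/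
/-!
`λ_A` is a root of `λ² + λ + εp₁ = 0`, so `1 + λ_A = -εp₁/λ_A`. Substituting this into
the intercepts turns both remainders into exactly `ε²` times a coefficient that is continuous
at `ε = 0` (since `λ_A → -1`). The leading terms `δp₁/p₂` and `-δp₁ε` are of order `√ε` and
`ε^{3/2}`, so they dominate these remainders and fix the signs for small `ε`.
-/

open Filter Real Topology Asymptotics

lemma isBigO_of_eventuallyEq_mul {α : Type*} {l : Filter α} {f c g : α → ℝ} {a : ℝ}
    (hc : Tendsto c l (𝓝 a)) (h : f =ᶠ[l] c * g) : f =O[l] g :=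
  isBigO_iff_exists_eq_mul.mpr ⟨c, hc.norm.isBoundedUnder_le, h⟩

lemma eventually_sign_eq_of_isLittleO {α : Type*} {l : Filter α} {f g : α → ℝ} {c : ℝ}
    (hc : c ≠ 0) (hg : ∀ᶠ x in l, 0 < g x) (h : (fun x => f x - c * g x) =o[l] g) :
    ∀ᶠ x in l, Real.sign (f x) = Real.sign c := by
  filter_upwards [h.bound (half_pos (abs_pos.2 hc)), hg] with x hx hgx
  rw [Real.norm_eq_abs, Real.norm_eq_abs, abs_of_pos hgx, abs_le] at hx
  rcases hc.lt_or_gt with hneg | hpos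
  · rw [abs_of_neg hneg] at hx
    rw [Real.sign_of_neg hneg, Real.sign_of_neg (by nlinarith)]
  · rw [abs_of_pos hpos] at hx
    rw [Real.sign_of_pos hpos, Real.sign_of_pos (by nlinarith)]

lemma tendsto_pi_mul_sqrt_nhdsGT : Tendsto (fun ε => π * √ε) (𝓝[>] 0) (𝓝 0) := by
  simpa using ((by fun_prop : Continuous fun ε => π * √ε).tendsto 0).mono_left
    (nhdsWithin_le_nhds (s := Set.Ioi 0))

lemma eventually_pi_mul_sqrt_pos : ∀ᶠ ε in 𝓝[>] 0, 0 < π * √ε := by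
  filter_upwards [self_mem_nhdsWithin] with ε hε
  exact mul_pos pi_pos (sqrt_pos.2 hε)

lemma isLittleO_id_sqrt : (fun ε : ℝ => ε) =o[𝓝[>] 0] (fun ε => √ε) := by
  have hsqrt : (fun ε : ℝ => √ε) =o[𝓝[>] 0] (fun _ => (1 : ℝ)) :=
    (isLittleO_one_iff ℝ).2
      ((continuous_sqrt.tendsto' 0 0 sqrt_zero).mono_left nhdsWithin_le_nhds)
  refine (hsqrt.mul_isBigO (isBigO_refl (fun ε : ℝ => √ε) _)).congr' ?_ (by simp)
  filter_upwards [self_mem_nhdsWithin] with ε hε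
  exact mul_self_sqrt (le_of_lt hε)

lemma isLittleO_id_pi_mul_sqrt : (fun ε : ℝ => ε) =o[𝓝[>] 0] (fun ε => π * √ε) :=
  (isLittleO_const_mul_right_iff pi_ne_zero).2 isLittleO_id_sqrt

noncomputable def lambdaA (p ε : ℝ) : ℝ := -(1 + √(1 - 4 * ε * p)) / 2

@[fun_prop]
lemma continuous_lambdaA (p : ℝ) : Continuous (lambdaA p) := by
  unfold lambdaA
  fun_prop

lemma lambdaA_zero (p : ℝ) : lambdaA p 0 = -1 := by
  norm_num [lambdaA]

lemma lambdaA_le_neg_half (p ε : ℝ) : lambdaA p ε ≤ -1 / 2 := by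
  have := sqrt_nonneg (1 - 4 * ε * p)
  unfold lambdaA
  linarith

lemma lambdaA_ne_zero (p ε : ℝ) : lambdaA p ε ≠ 0 :=
  ((lambdaA_le_neg_half p ε).trans_lt (by norm_num)).ne

lemma lambdaA_sq_add_self {p ε : ℝ} (h : 4 * ε * p ≤ 1) :
    lambdaA p ε ^ 2 + lambdaA p ε + ε * p = 0 := by
  have := sq_sqrt (show 0 ≤ 1 - 4 * ε * p by linarith)
  unfold lambdaA
  linear_combination this / 4

lemma tendsto_lambdaA_sq_nhdsGT (p : ℝ) :
    Tendsto (fun ε => lambdaA p ε ^ 2) (𝓝[>] 0) (𝓝 1) := by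
  simpa [lambdaA_zero] using
    (((continuous_lambdaA p).tendsto 0).pow 2).mono_left nhdsWithin_le_nhds

lemma eventually_pos_and_four_mul_le_one (p : ℝ) :
    ∀ᶠ ε in 𝓝[>] 0, 0 < ε ∧ 4 * ε * p ≤ 1 := by
  have h : Tendsto (fun ε : ℝ => 4 * ε * p) (𝓝 0) (𝓝 0) := by
    simpa using ((by fun_prop : Continuous fun ε : ℝ => 4 * ε * p).tendsto 0)
  filter_upwards [self_mem_nhdsWithin,
    (h.eventually_lt_const one_pos).filter_mono nhdsWithin_le_nhds] with ε hε hsmall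
  exact ⟨hε, hsmall.le⟩

noncomputable def yIntercept (p1 p2 p3 ε : ℝ) : ℝ :=
  -(π * √ε) * (1 + lambdaA p1 ε) - p2 * p3 / lambdaA p1 ε ^ 2 * ε ^ 2

noncomputable def zInterceptA (p1 p2 p3 ε : ℝ) : ℝ :=
  lambdaA p1 ε / (ε * p2) * yIntercept p1 p2 p3 ε

section Intercepts

variable {p1 p2 p3 : ℝ}

lemma yIntercept_add_eq {ε : ℝ} (h : 4 * ε * p1 ≤ 1) :
    yIntercept p1 p2 p3 ε + π * √ε * p1 * ε
      = -(π * √ε * p1 ^ 2 + p2 * p3) / lambdaA p1 ε ^ 2 * ε ^ 2 := by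
  have hL := lambdaA_sq_add_self h
  have := lambdaA_ne_zero p1 ε
  unfold yIntercept
  field_simp
  linear_combination -(π * √ε * (lambdaA p1 ε - p1 * ε)) * hL

lemma zInterceptA_sub_eq {ε : ℝ} (hε : ε ≠ 0) (hp2 : p2 ≠ 0) (h : 4 * ε * p1 ≤ 1) :
    zInterceptA p1 p2 p3 ε - (π * √ε * p1 / p2 + p3 * ε)
      = p1 * p3 / lambdaA p1 ε ^ 2 * ε ^ 2 := by
  have hL := lambdaA_sq_add_self h
  have := lambdaA_ne_zero p1 ε
  unfold zInterceptA yIntercept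
  field_simp
  linear_combination -(lambdaA p1 ε ^ 2 * (π * √ε) + p2 * p3 * ε ^ 2) * hL

variable (p1 p2 p3)

lemma isBigO_yIntercept_add :
    (fun ε => yIntercept p1 p2 p3 ε + π * √ε * p1 * ε) =O[𝓝[>] 0] (fun ε => ε ^ 2) := by
  refine isBigO_of_eventuallyEq_mul
    (((((tendsto_pi_mul_sqrt_nhdsGT.mul_const (p1 ^ 2)).add_const (p2 * p3)).neg).div
      (tendsto_lambdaA_sq_nhdsGT p1) one_ne_zero)) ?_
  filter_upwards [eventually_pos_and_four_mul_le_one p1] with ε ⟨_, h⟩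
  exact yIntercept_add_eq h

lemma isBigO_zInterceptA_sub (hp2 : p2 ≠ 0) :
    (fun ε => zInterceptA p1 p2 p3 ε - (π * √ε * p1 / p2 + p3 * ε))
      =O[𝓝[>] 0] (fun ε => ε ^ 2) := by
  refine isBigO_of_eventuallyEq_mul
    ((tendsto_const_nhds (x := p1 * p3)).div (tendsto_lambdaA_sq_nhdsGT p1) one_ne_zero) ?_
  filter_upwards [eventually_pos_and_four_mul_le_one p1] with ε ⟨hε, h⟩
  exact zInterceptA_sub_eq hε.ne' hp2 h

lemma eventually_sign_yIntercept (hp1 : p1 ≠ 0) :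
    ∀ᶠ ε in 𝓝[>] 0, Real.sign (yIntercept p1 p2 p3 ε) = -Real.sign p1 := by
  have hsq : (fun ε : ℝ => ε ^ 2) =o[𝓝[>] 0] (fun ε => π * √ε * ε) := by
    simpa only [sq] using isLittleO_id_pi_mul_sqrt.mul_isBigO (isBigO_refl (fun ε : ℝ => ε) _)
  have hpos : ∀ᶠ ε in 𝓝[>] 0, 0 < π * √ε * ε := by
    filter_upwards [eventually_pi_mul_sqrt_pos, self_mem_nhdsWithin] with ε hδ hε
    exact mul_pos hδ hε
  rw [← Real.sign_neg]
  exact eventually_sign_eq_of_isLittleO (neg_ne_zero.2 hp1) hpos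
    (((isBigO_yIntercept_add p1 p2 p3).trans_isLittleO hsq).congr_left fun ε => by ring)

lemma eventually_sign_zInterceptA (hp1 : p1 ≠ 0) (hp2 : p2 ≠ 0) :
    ∀ᶠ ε in 𝓝[>] 0, Real.sign (zInterceptA p1 p2 p3 ε) = Real.sign (p1 / p2) := by
  have hsq : (fun ε : ℝ => ε ^ 2) =O[𝓝[>] 0] (fun ε => ε) := by
    simpa using ((isLittleO_pow_pow (𝕜 := ℝ) one_lt_two).isBigO).mono nhdsWithin_le_nhds
  refine eventually_sign_eq_of_isLittleO (div_ne_zero hp1 hp2) eventually_pi_mul_sqrt_pos ?_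
  exact ((((isBigO_zInterceptA_sub p1 p2 p3 hp2).trans hsq).add
    ((isBigO_refl _ _).const_mul_left p3)).trans_isLittleO isLittleO_id_pi_mul_sqrt).congr_left
    fun ε => by ring

end Intercepts

theorem intercepts_asymptotics_general (p1 p2 p3 : ℝ) (hp1 : 0 < p1) (hp2 : p2 ≠ 0) :
    let lamA := fun ε : ℝ => -(1 + Real.sqrt (1 - 4 * ε * p1)) / 2
    let δ := fun ε : ℝ => Real.pi * Real.sqrt ε
    let yStar := fun ε : ℝ => -δ ε * (1 + lamA ε) - (p2 * p3 / (lamA ε) ^ 2) * ε ^ 2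
    let zA := fun ε : ℝ => (lamA ε / (ε * p2)) *
      (-δ ε * (1 + lamA ε) - (p2 * p3 / (lamA ε) ^ 2) * ε ^ 2)
    let zR := fun ε : ℝ => (-(lamA ε) / (ε * p2)) *
      (-δ ε * (1 - (-(lamA ε))) - (p2 * p3 / (lamA ε) ^ 2) * ε ^ 2)
    (∀ ε : ℝ, 0 < ε → 4 * ε * p1 < 1 → zR ε = -(zA ε)) ∧
    (fun ε : ℝ => zA ε - (δ ε * p1 / p2 + p3 * ε))
      =O[nhdsWithin 0 (Set.Ioi 0)] (fun ε : ℝ => ε ^ 2) ∧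
    (fun ε : ℝ => yStar ε + δ ε * p1 * ε)
      =O[nhdsWithin 0 (Set.Ioi 0)] (fun ε : ℝ => ε ^ 2) ∧
    (∃ ε0 : ℝ, 0 < ε0 ∧ ∀ ε ∈ Set.Ioo 0 ε0,
      Real.sign (yStar ε) = -Real.sign p1 ∧ Real.sign (zA ε) = Real.sign (p1 / p2)) := by
  intro lamA δ yStar zA zR
  obtain ⟨ε0, hε0, hsign⟩ := (nhdsGT_basis 0).eventually_iff.mp
    ((eventually_sign_yIntercept p1 p2 p3 hp1.ne').and
      (eventually_sign_zInterceptA p1 p2 p3 hp1.ne' hp2))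
  exact ⟨fun ε _ _ => by simp only [zR, zA]; ring, isBigO_zInterceptA_sub p1 p2 p3 hp2,
    isBigO_yIntercept_add p1 p2 p3, ε0, hε0, hsign⟩

/-- Intercepts of the lines `L_ε^A` and `L_ε^R` with `δ = π√ε`: exactly `z_R* = −z_A*`,
with asymptotics `z_A* = δp₁/p₂ + p₃ε + O(ε²)`, `y* = −δp₁ε + O(ε²)` as `ε → 0⁺`, and
for `ε` small enough `sign(y*) = −sign(p₁)` and `sign(z_A*) = sign(p₁/p₂)`. -/
theorem intercepts_asymptotics (p1 p2 p3 : ℝ) (hp1 : 0 < p1) (hp2 : p2 ≠ 0) (hp3 : 0 < p3) :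
    let lamA := fun ε : ℝ => -(1 + Real.sqrt (1 - 4 * ε * p1)) / 2
    let δ := fun ε : ℝ => Real.pi * Real.sqrt ε
    let yStar := fun ε : ℝ => -δ ε * (1 + lamA ε) - (p2 * p3 / (lamA ε) ^ 2) * ε ^ 2
    let zA := fun ε : ℝ => (lamA ε / (ε * p2)) *
      (-δ ε * (1 + lamA ε) - (p2 * p3 / (lamA ε) ^ 2) * ε ^ 2)
    let zR := fun ε : ℝ => (-(lamA ε) / (ε * p2)) *
      (-δ ε * (1 - (-(lamA ε))) - (p2 * p3 / (lamA ε) ^ 2) * ε ^ 2)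
    (∀ ε : ℝ, 0 < ε → 4 * ε * p1 < 1 → zR ε = -(zA ε)) ∧
    (fun ε : ℝ => zA ε - (δ ε * p1 / p2 + p3 * ε))
      =O[nhdsWithin 0 (Set.Ioi 0)] (fun ε : ℝ => ε ^ 2) ∧
    (fun ε : ℝ => yStar ε + δ ε * p1 * ε)
      =O[nhdsWithin 0 (Set.Ioi 0)] (fun ε : ℝ => ε ^ 2) ∧
    (∃ ε0 : ℝ, 0 < ε0 ∧ ∀ ε ∈ Set.Ioo 0 ε0,
      Real.sign (yStar ε) = -Real.sign p1 ∧ Real.sign (zA ε) = Real.sign (p1 / p2)) :=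
  intercepts_asymptotics_general p1 p2 p3 hp1 hp2
end

section
/- Suppose p₁ > 0, p₂ < 0, p₃ > 0, and let N be the integer such that z̃₁ = δp₁/p₂ + (p₃/√p₁)√ε + O(ε) lies in the interval (r̃_N, r̃_{N−1}), where r̃_k = −((2k+1)/2)(p₃√ε/√p₁)(π/2) and δ = π√ε. Then for ε small enough, −(4+π)/(4π) < N/2 − μ < (π−4)/(4π), where μ = p₁√p₁/|p₂p₃|; consequently the number [N/2] + 1 of maximal canards equals [μ] + 1 (for generic μ). -/
/-!
After the common positive scale `c = p₃√ε/√p₁` is factored out, the asymptotes become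
`r̃_k = -(2k+1)π c/4` and the pole becomes `z̃₁ = c (1 - πμ)`, because
`δ p₁/p₂ = -π c μ` when `p₂ < 0 < p₃`. Cancelling `c` and dividing by `π` turns
`r̃_N < z̃₁ < r̃_{N-1}` into `-(2N+1)/4 < 1/π - μ < -(2N-1)/4`.
-/

open Real

lemma canard_scale_mul_mu {ε p1 p2 p3 : ℝ} (hp1 : 0 < p1) (hp2 : p2 < 0) (hp3 : 0 < p3) :
    p3 * √ε / √p1 * (p1 * √p1 / |p2 * p3|) = -(√ε * p1 / p2) := by
  have hq : √p1 ≠ 0 := (sqrt_pos.mpr hp1).ne'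
  rw [abs_of_neg (mul_neg_of_neg_of_pos hp2 hp3)]
  field_simp

lemma canard_lower_bound_of_asymptote_lt {c μ n : ℝ} (hc : 0 < c)
    (h : -((2 * n + 1) / 2) * c * (π / 2) < c * (1 - π * μ)) :
    -(4 + π) / (4 * π) < n / 2 - μ := by
  have h' : -((2 * n + 1) / 2) * (π / 2) < 1 - π * μ :=
    lt_of_mul_lt_mul_left (by linarith) hc.le
  rw [div_lt_iff₀ (by positivity)]
  linarith

lemma canard_upper_bound_of_lt_asymptote {c μ n : ℝ} (hc : 0 < c)
    (h : c * (1 - π * μ) < -((2 * (n - 1) + 1) / 2) * c * (π / 2)) :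
    n / 2 - μ < (π - 4) / (4 * π) := by
  have h' : 1 - π * μ < -((2 * (n - 1) + 1) / 2) * (π / 2) :=
    lt_of_mul_lt_mul_left (by linarith) hc.le
  rw [lt_div_iff₀ (by positivity)]
  linarith

/-- If the pole `z̃₁ = δp₁/p₂ + (p₃/√p₁)√ε` (with `δ = π√ε`, leading order) lies in
`(r̃_N, r̃_{N−1})`, then `−(4+π)/(4π) < N/2 − μ < (π−4)/(4π)`, where
`μ = p₁√p₁/|p₂p₃|`. -/
theorem canard_count_estimate (ε p1 p2 p3 : ℝ) (N : ℤ) (hε : 0 < ε) (hp1 : 0 < p1)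
    (hp2 : p2 < 0) (hp3 : 0 < p3) :
    let rt := fun k : ℤ => -((2 * (k : ℝ) + 1) / 2) * (p3 * Real.sqrt ε / Real.sqrt p1) * (Real.pi / 2)
    let z1t := Real.pi * Real.sqrt ε * p1 / p2 + (p3 / Real.sqrt p1) * Real.sqrt ε
    let μ := p1 * Real.sqrt p1 / |p2 * p3|
    rt N < z1t → z1t < rt (N - 1) →
      -(4 + Real.pi) / (4 * Real.pi) < (N : ℝ) / 2 - μ ∧
      (N : ℝ) / 2 - μ < (Real.pi - 4) / (4 * Real.pi) := by
  intro rt z1t μ hlower hupper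
  have hc : 0 < p3 * √ε / √p1 := by positivity
  have hz : z1t = p3 * √ε / √p1 * (1 - π * μ) := by
    simp only [z1t, μ]
    linear_combination π * canard_scale_mul_mu (ε := ε) hp1 hp2 hp3
  simp only [rt, hz, Int.cast_sub, Int.cast_one] at hlower hupper
  exact ⟨canard_lower_bound_of_asymptote_lt hc hlower,
    canard_upper_bound_of_lt_asymptote hc hupper⟩
end
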